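/- arXiv:1003.2285 — 3 statements merged into one kernel-verified Lean document; each statement's English description precedes it below -/
import Mathlib

section
/- Let M be a smooth Minkowski space whose compatible semi-inner-product B satisfies the Lipschitz property, and suppose that no intersection of the unit sphere S = {x ∈ M : ‖x‖ = 1} with a two-dimensional linear subspace of M is an ellipse with the origin as its centre (i.e., for no two-dimensional subspace P is the restriction of the norm to P induced by an inner product on P). Then every diagonalizable linear operator on M that is adjoint abelian with respect to B is a scalar multiple of an isometry of M. -/
/-!
Smoothness pins down the semi-inner-product: `B v w = ‖w‖ · D‖·‖(w) v`, so `B` is homogeneous in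
its second variable, and the Lipschitz property makes it continuous there. Let `x`, `y` be
eigenvectors of the adjoint abelian operator `A` with eigenvalues `|ν| < |μ|`. Adjointness gives
`B x (αx + βy) = B x (αx + (ν/μ)βy)`; iterating and passing to the limit, `B x (αx + βy) = α‖x‖²`.
Hence `∂/∂α ‖αx + βy‖² = 2α‖x‖²`, so `‖αx + βy‖² = α²‖x‖² + β²‖y‖²` and the plane spanned by
`x`, `y` is a Euclidean section. Without such sections all eigenvalues share one modulus `c`, so
`A² = c²` and `‖Ax‖² = B(x, A²x) = c²‖x‖²`: the operator `A / c` is an isometry.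
-/

open Filter Topology

theorem eq_norm_mul_fderiv_norm {E : Type*} [NormedAddCommGroup E] [NormedSpace ℝ E]
    {g : E →ₗ[ℝ] ℝ} {w : E} (hd : DifferentiableAt ℝ (‖·‖) w) (hgw : g w = ‖w‖ ^ 2)
    (hg : ∀ v, |g v| ≤ ‖v‖ * ‖w‖) (v : E) : g v = ‖w‖ * fderiv ℝ (‖·‖) w v := by
  let G : E →L[ℝ] ℝ := g.mkContinuous ‖w‖ fun v => by rw [Real.norm_eq_abs, mul_comm]; exact hg v
  -- `‖w‖ ‖·‖ - g` is nonnegative and vanishes at `w`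
  have hmin : IsLocalMin (fun u => ‖w‖ * ‖u‖ - G u) w := by
    refine Eventually.of_forall fun u => ?_
    simp only [G, LinearMap.mkContinuous_apply, hgw]
    linarith [(abs_le.mp (hg u)).2]
  have h := congrArg (· v) <| hmin.hasFDerivAt_eq_zero <|
    (hd.hasFDerivAt.const_mul ‖w‖).sub G.hasFDerivAt
  simp only [sub_apply, smul_apply, smul_eq_mul, zero_apply, G,
    LinearMap.mkContinuous_apply] at h
  linarith

theorem eq_apply_zero_of_apply_mul_eq {f : ℝ → ℝ} {s : ℝ} (hf : ContinuousAt f 0) (hs : |s| < 1)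
    (hfs : ∀ t, f (s * t) = f t) (t : ℝ) : f t = f 0 := by
  have hpow : ∀ n : ℕ, f (s ^ n * t) = f t := by
    intro n
    induction n with
    | zero => simp
    | succ n ih => rw [pow_succ', mul_assoc, hfs, ih]
  have hlim : Tendsto (fun n : ℕ => f (s ^ n * t)) atTop (𝓝 (f 0)) := by
    refine hf.tendsto.comp ?_
    simpa using (tendsto_pow_atTop_nhds_zero_of_abs_lt_one hs).mul_const t
  exact tendsto_nhds_unique (by simpa only [hpow] using tendsto_const_nhds) hlim

theorem exists_isometry_smul_of_norm_map_eq {E : Type*} [NormedAddCommGroup E] [NormedSpace ℝ E]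
    {A : E →ₗ[ℝ] E} {c : ℝ} (hc : 0 ≤ c) (hA : ∀ x, ‖A x‖ = c * ‖x‖) :
    ∃ T : E →ₗ[ℝ] E, (∀ x, ‖T x‖ = ‖x‖) ∧ ∀ x, A x = c • T x := by
  rcases hc.eq_or_lt with rfl | hc
  · exact ⟨LinearMap.id, fun _ => rfl, fun x => by simpa using hA x⟩
  refine ⟨c⁻¹ • A, fun x => ?_, fun x => ?_⟩
  · rw [LinearMap.smul_apply, norm_smul, hA, Real.norm_of_nonneg (inv_nonneg.mpr hc.le),
      inv_mul_cancel_left₀ hc.ne']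
  · rw [LinearMap.smul_apply, smul_inv_smul₀ hc.ne']

structure IsCompatibleSIP {M : Type*} [NormedAddCommGroup M] [Module ℝ M]
    (B : M → M → ℝ) : Prop where
  add_left : ∀ x y z, B (x + y) z = B x z + B y z
  smul_left : ∀ (c : ℝ) x y, B (c • x) y = c * B x y
  sq_le : ∀ x y, B x y ^ 2 ≤ B x x * B y y
  norm_sq : ∀ x, ‖x‖ ^ 2 = B x x

def HasLipschitzProperty {M : Type*} [NormedAddCommGroup M] (B : M → M → ℝ) : Prop :=
  ∀ x : M, ‖x‖ = 1 → ∃ κ : ℝ, ∀ y z : M, ‖y‖ = 1 → ‖z‖ = 1 → |B x y - B x z| ≤ κ * ‖y - z‖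

namespace IsCompatibleSIP

variable {M : Type*} [NormedAddCommGroup M] [NormedSpace ℝ M] {B : M → M → ℝ}

def linearLeft (hB : IsCompatibleSIP B) (w : M) : M →ₗ[ℝ] ℝ where
  toFun v := B v w
  map_add' x y := hB.add_left x y w
  map_smul' c x := hB.smul_left c x w

theorem abs_le (hB : IsCompatibleSIP B) (v w : M) : |B v w| ≤ ‖v‖ * ‖w‖ := by
  refine abs_le_of_sq_le_sq ?_ (by positivity)
  rw [mul_pow, hB.norm_sq, hB.norm_sq]
  exact hB.sq_le v w

theorem zero_left (hB : IsCompatibleSIP B) (w : M) : B 0 w = 0 := by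
  simpa using hB.smul_left 0 0 w

theorem zero_right (hB : IsCompatibleSIP B) (v : M) : B v 0 = 0 := by
  simpa using hB.abs_le v 0

variable (hsmooth : ∀ x : M, x ≠ 0 → DifferentiableAt ℝ (‖·‖) x)
include hsmooth

theorem eq_norm_mul_fderiv (hB : IsCompatibleSIP B) (v : M) {w : M} (hw : w ≠ 0) :
    B v w = ‖w‖ * fderiv ℝ (‖·‖) w v :=
  eq_norm_mul_fderiv_norm (g := hB.linearLeft w) (hsmooth w hw) (hB.norm_sq w).symm
    (fun v => hB.abs_le v w) v

theorem smul_right (hB : IsCompatibleSIP B) (c : ℝ) (v w : M) : B v (c • w) = c * B v w := by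
  rcases eq_or_ne (c • w) 0 with hcw | hcw
  · rcases smul_eq_zero.mp hcw with rfl | rfl <;> simp [hB.zero_right]
  rw [hB.eq_norm_mul_fderiv hsmooth v hcw]
  refine (eq_norm_mul_fderiv_norm (g := c • hB.linearLeft w) (hsmooth _ hcw) ?_ ?_ v).symm
  · simp only [linearLeft, map_smul, LinearMap.smul_apply, LinearMap.coe_mk, AddHom.coe_mk,
      ← hB.norm_sq, smul_eq_mul, norm_smul, Real.norm_eq_abs, mul_pow, sq_abs]
    ring
  · intro u
    simp only [LinearMap.smul_apply, linearLeft, LinearMap.coe_mk, AddHom.coe_mk, smul_eq_mul,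
      abs_mul, norm_smul, Real.norm_eq_abs]
    nlinarith [hB.abs_le u w, abs_nonneg c]

theorem continuous_right (hB : IsCompatibleSIP B) (hlip : HasLipschitzProperty B) (u : M) :
    Continuous (B u) := by
  have hunit : ∀ w : M, w ≠ 0 → ‖‖w‖⁻¹ • w‖ = 1 := fun w hw => by
    rw [norm_smul, norm_inv, norm_norm, inv_mul_cancel₀ (norm_ne_zero_iff.mpr hw)]
  rcases eq_or_ne u 0 with rfl | hu
  · rw [show B 0 = fun _ => 0 from funext hB.zero_left]
    exact continuous_const
  obtain ⟨κ, hκ⟩ := hlip (‖u‖⁻¹ • u) (hunit u hu)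
  have hg : ContinuousOn (B (‖u‖⁻¹ • u)) (Metric.sphere 0 1) := by
    refine (LipschitzOnWith.of_dist_le_mul (K := κ.toNNReal) fun y hy z hz => ?_).continuousOn
    rw [Real.dist_eq, dist_eq_norm]
    exact (hκ y z (by simpa using hy) (by simpa using hz)).trans
      (mul_le_mul_of_nonneg_right (Real.le_coe_toNNReal κ) (norm_nonneg _))
  have hBu : B u = fun w => ‖u‖ * (‖w‖ * B (‖u‖⁻¹ • u) (‖w‖⁻¹ • w)) := by
    ext w
    rcases eq_or_ne w 0 with rfl | hw
    · simp [hB.zero_right]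
    rw [hB.smul_right hsmooth, hB.smul_left]
    field_simp
  refine continuous_iff_continuousAt.mpr fun w => ?_
  rcases eq_or_ne w 0 with rfl | hw
  · have hlim : Tendsto (fun w : M => ‖u‖ * ‖w‖) (𝓝 0) (𝓝 0) :=
      Continuous.tendsto' (by fun_prop) 0 0 (by simp)
    simpa [ContinuousAt, hB.zero_right] using
      squeeze_zero_norm (fun w => (hB.abs_le u w).trans_eq rfl) hlim
  have hnormalize : ContinuousAt (fun w : M => ‖w‖⁻¹ • w) w := by
    fun_prop (disch := simpa using hw)
  have hgn : ContinuousAt (fun w : M => B (‖u‖⁻¹ • u) (‖w‖⁻¹ • w)) w :=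
    ((hg _ (by simpa using hunit w hw)).comp hnormalize.continuousWithinAt
      (s := {w | w ≠ 0}) fun v hv => by simpa using hunit v hv).continuousAt
      (isOpen_ne.mem_nhds hw)
  rw [hBu]
  exact continuousAt_const.mul (continuous_norm.continuousAt.mul hgn)

theorem hasDerivAt_norm_sq_smul_add (hB : IsCompatibleSIP B) {v w : M} {t : ℝ}
    (h : t • v + w ≠ 0) : HasDerivAt (fun s : ℝ => ‖s • v + w‖ ^ 2) (2 * B v (t • v + w)) t := by
  have hline : HasDerivAt (fun s : ℝ => s • v + w) v t := by
    simpa using ((hasDerivAt_id t).smul_const v).add_const w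
  refine (((hsmooth _ h).hasFDerivAt.comp_hasDerivAt t hline).pow 2).congr_deriv ?_
  rw [hB.eq_norm_mul_fderiv hsmooth v h]
  simp only [Function.comp_apply, Nat.cast_ofNat]
  ring

theorem norm_sq_smul_add_smul (hB : IsCompatibleSIP B) {x y : M}
    (hli : LinearIndependent ℝ ![x, y]) (hxy : ∀ α β : ℝ, B x (α • x + β • y) = α * B x x)
    (α β : ℝ) : ‖α • x + β • y‖ ^ 2 = α ^ 2 * ‖x‖ ^ 2 + β ^ 2 * ‖y‖ ^ 2 := by
  rcases eq_or_ne β 0 with rfl | hβ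
  · simp [norm_smul, mul_pow]
  have hne : ∀ a : ℝ, a • x + β • y ≠ 0 := fun a h =>
    hβ (LinearIndependent.pair_iff.mp hli a β h).2
  -- its derivative is `2 B x (a • x + β • y) - 2 a ‖x‖² = 0`
  set g : ℝ → ℝ := fun a => ‖a • x + β • y‖ ^ 2 - a ^ 2 * ‖x‖ ^ 2
  have hg : ∀ a, HasDerivAt g 0 a := fun a => by
    refine ((hB.hasDerivAt_norm_sq_smul_add hsmooth (hne a)).sub
      ((hasDerivAt_pow 2 a).mul_const (‖x‖ ^ 2))).congr_deriv ?_
    rw [hxy, ← hB.norm_sq]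
    ring
  have := is_const_of_deriv_eq_zero (fun a => (hg a).differentiableAt) (fun a => (hg a).deriv) α 0
  simp only [g, zero_smul, zero_add, norm_smul, mul_pow, Real.norm_eq_abs, sq_abs] at this
  linarith

end IsCompatibleSIP

section Ellipse

variable {M : Type*} [NormedAddCommGroup M] [NormedSpace ℝ M]

def IsEllipseSection (P : Submodule ℝ M) : Prop :=
  Module.finrank ℝ P = 2 ∧
    ∃ f : P →ₗ[ℝ] P →ₗ[ℝ] ℝ, (∀ u v : P, f u v = f v u) ∧ ∀ v : P, f v v = ‖v‖ ^ 2

theorem isEllipseSection_span_pair {x y : M} (hli : LinearIndependent ℝ ![x, y])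
    (hnorm : ∀ α β : ℝ, ‖α • x + β • y‖ ^ 2 = α ^ 2 * ‖x‖ ^ 2 + β ^ 2 * ‖y‖ ^ 2) :
    IsEllipseSection (Submodule.span ℝ (Set.range ![x, y])) := by
  refine ⟨by simp [finrank_span_eq_card hli], ?_⟩
  set P := Submodule.span ℝ (Set.range ![x, y])
  set b : Module.Basis (Fin 2) ℝ P := Module.Basis.span hli with hb
  have hrepr : ∀ v : P, (v : M) = b.coord 0 v • x + b.coord 1 v • y := fun v => by
    have h := congrArg Subtype.val (b.sum_repr v)
    rw [Fin.sum_univ_two, Submodule.coe_add, Submodule.coe_smul, Submodule.coe_smul, hb,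
      Module.Basis.span_apply, Module.Basis.span_apply] at h
    simpa using h.symm
  refine ⟨LinearMap.mk₂ ℝ
    (fun u v => b.coord 0 u * b.coord 0 v * ‖x‖ ^ 2 + b.coord 1 u * b.coord 1 v * ‖y‖ ^ 2)
    (fun _ _ _ => by simp only [map_add]; ring)
    (fun _ _ _ => by simp only [map_smul, smul_eq_mul]; ring)
    (fun _ _ _ => by simp only [map_add]; ring)
    (fun _ _ _ => by simp only [map_smul, smul_eq_mul]; ring),
    fun u v => by simp only [LinearMap.mk₂_apply]; ring, fun v => ?_⟩
  rw [LinearMap.mk₂_apply, Submodule.coe_norm, hrepr, hnorm]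
  ring

end Ellipse

def IsAdjointAbelian {M : Type*} [AddCommGroup M] [Module ℝ M] (B : M → M → ℝ)
    (A : M →ₗ[ℝ] M) : Prop :=
  ∀ x y, B (A x) y = B x (A y)

namespace IsAdjointAbelian

variable {M : Type*} [NormedAddCommGroup M] [NormedSpace ℝ M] {B : M → M → ℝ}
  {A : M →ₗ[ℝ] M} (hsmooth : ∀ x : M, x ≠ 0 → DifferentiableAt ℝ (‖·‖) x)
include hsmooth

theorem apply_smul_add_smul_of_abs_lt (hA : IsAdjointAbelian B A) (hB : IsCompatibleSIP B)
    (hlip : HasLipschitzProperty B) {x y : M} {μ ν : ℝ} (hx : A x = μ • x) (hy : A y = ν • y)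
    (hνμ : |ν| < |μ|) (α β : ℝ) : B x (α • x + β • y) = α * B x x := by
  have hμ : μ ≠ 0 := by
    rintro rfl
    exact (abs_nonneg ν).not_gt (by simpa using hνμ)
  set f : ℝ → ℝ := fun t => B x (α • x + t • y)
  have hf : ContinuousAt f 0 :=
    ((hB.continuous_right hsmooth hlip x).comp (by fun_prop)).continuousAt
  -- `B (A x) u = B x (A u)` says `f t = f (ν / μ * t)`; iterating drives `t` to `0`
  have hfs : ∀ t, f (ν / μ * t) = f t := fun t => by
    have hAu : A (α • x + t • y) = μ • (α • x + (ν / μ * t) • y) := by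
      rw [map_add, map_smul, map_smul, hx, hy]
      match_scalars <;> field_simp
    have := hA x (α • x + t • y)
    rw [hAu, hB.smul_right hsmooth, hx, hB.smul_left] at this
    exact (mul_left_cancel₀ hμ this).symm
  have hs : |ν / μ| < 1 := by rwa [abs_div, div_lt_one (abs_pos.mpr hμ)]
  rw [show B x (α • x + β • y) = f β from rfl, eq_apply_zero_of_apply_mul_eq hf hs hfs β]
  simp [f, hB.smul_right hsmooth]

theorem exists_isEllipseSection_of_abs_lt (hA : IsAdjointAbelian B A) (hB : IsCompatibleSIP B)
    (hlip : HasLipschitzProperty B) {x y : M} (hli : LinearIndependent ℝ ![x, y]) {μ ν : ℝ}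
    (hx : A x = μ • x) (hy : A y = ν • y) (hνμ : |ν| < |μ|) :
    ∃ P : Submodule ℝ M, IsEllipseSection P :=
  ⟨_, isEllipseSection_span_pair hli <| hB.norm_sq_smul_add_smul hsmooth hli <|
    hA.apply_smul_add_smul_of_abs_lt hsmooth hB hlip hx hy hνμ⟩

theorem norm_sq_apply (hA : IsAdjointAbelian B A) (hB : IsCompatibleSIP B) {a : ℝ}
    (hA2 : ∀ x, A (A x) = a • x) (x : M) : ‖A x‖ ^ 2 = a * ‖x‖ ^ 2 := by
  rw [hB.norm_sq, hB.norm_sq, hA, hA2, hB.smul_right hsmooth]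

end IsAdjointAbelian

theorem Module.Basis.apply_apply_eq_sq_smul_of_abs_eq {M ι : Type*} [AddCommGroup M]
    [Module ℝ M] (b : Module.Basis ι ℝ M) {A : M →ₗ[ℝ] M} {μ : ι → ℝ} {c : ℝ}
    (hμ : ∀ i, A (b i) = μ i • b i) (hc : ∀ i, |μ i| = c) (x : M) : A (A x) = c ^ 2 • x := by
  have hA2 : A ∘ₗ A = c ^ 2 • LinearMap.id := b.ext fun i => by
    rw [LinearMap.comp_apply, hμ, map_smul, hμ, smul_smul, ← hc i, sq_abs]
    simp [sq]
  simpa using LinearMap.congr_fun hA2 x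

theorem Module.Basis.linearIndependent_pair {M ι : Type*} [AddCommGroup M] [Module ℝ M]
    (b : Module.Basis ι ℝ M) {i j : ι} (hij : i ≠ j) : LinearIndependent ℝ ![b i, b j] :=
  LinearIndependent.pair_iff.mpr <|
    (LinearIndepOn.pair_iff b hij).mp (b.linearIndependent.linearIndepOn _)

theorem no_ellipse_section_adjoint_abelian_general
    {M : Type*} [NormedAddCommGroup M] [NormedSpace ℝ M]
    (B : M → M → ℝ)
    (hadd : ∀ x y z : M, B (x + y) z = B x z + B y z)
    (hsmul : ∀ (c : ℝ) (x y : M), B (c • x) y = c * B x y)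
    (hschwartz : ∀ x y : M, (B x y) ^ 2 ≤ B x x * B y y)
    (hcompat : ∀ x : M, ‖x‖ ^ 2 = B x x)
    (hsmooth : ∀ x : M, x ≠ 0 → DifferentiableAt ℝ (fun y : M => ‖y‖) x)
    (hlip : ∀ x : M, ‖x‖ = 1 → ∃ κ : ℝ, ∀ y z : M, ‖y‖ = 1 → ‖z‖ = 1 →
      |B x y - B x z| ≤ κ * ‖y - z‖)
    -- no two-dimensional subspace has its norm induced by an inner product:
    (hnoellipse : ¬ ∃ P : Submodule ℝ M, Module.finrank ℝ P = 2 ∧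
        ∃ f : P →ₗ[ℝ] P →ₗ[ℝ] ℝ, (∀ u v : P, f u v = f v u) ∧ ∀ v : P, f v v = ‖v‖ ^ 2) :
    ∀ A : M →ₗ[ℝ] M,
      (∃ (ι : Type) (b : Module.Basis ι ℝ M), ∀ i, ∃ μ : ℝ, A (b i) = μ • b i) →
      (∀ x y : M, B (A x) y = B x (A y)) →
      ∃ (c : ℝ) (T : M →ₗ[ℝ] M), (∀ x : M, ‖T x‖ = ‖x‖) ∧ ∀ x : M, A x = c • T x := by
  intro A ⟨ι, b, heig⟩ (hA : IsAdjointAbelian B A)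
  choose μ hμ using heig
  have hB : IsCompatibleSIP B := ⟨hadd, hsmul, hschwartz, hcompat⟩
  have habs : ∀ i j, |μ j| ≤ |μ i| := fun i j => not_lt.mp fun hlt =>
    hnoellipse <| IsAdjointAbelian.exists_isEllipseSection_of_abs_lt hsmooth hA hB hlip
      (b.linearIndependent_pair (ne_of_apply_ne (|μ ·|) hlt.ne')) (hμ j) (hμ i) hlt
  obtain ⟨c, hc0, hc⟩ : ∃ c, 0 ≤ c ∧ ∀ i, |μ i| = c := by
    rcases isEmpty_or_nonempty ι with hι | ⟨⟨i₀⟩⟩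
    · exact ⟨0, le_rfl, hι.elim⟩
    · exact ⟨|μ i₀|, abs_nonneg _, fun i => le_antisymm (habs i₀ i) (habs i i₀)⟩
  have hnorm : ∀ x, ‖A x‖ = c * ‖x‖ := fun x => by
    rw [← pow_left_inj₀ (norm_nonneg _) (by positivity) two_ne_zero, mul_pow]
    exact hA.norm_sq_apply hsmooth hB (b.apply_apply_eq_sq_smul_of_abs_eq hμ hc) x
  exact ⟨c, exists_isometry_smul_of_norm_map_eq hc0 hnorm⟩

/-- If no two-dimensional central section of the unit sphere of a smooth
Minkowski space with Lipschitz semi-inner-product is an ellipse (i.e. no two-dimensional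
subspace has its norm induced by an inner product), then every diagonalizable adjoint
abelian operator is a scalar multiple of an isometry. -/
theorem no_ellipse_section_adjoint_abelian
    {M : Type*} [NormedAddCommGroup M] [NormedSpace ℝ M] [FiniteDimensional ℝ M]
    (B : M → M → ℝ)
    (hadd : ∀ x y z : M, B (x + y) z = B x z + B y z)
    (hsmul : ∀ (c : ℝ) (x y : M), B (c • x) y = c * B x y)
    (hpos : ∀ x : M, 0 ≤ B x x)
    (hdef : ∀ x : M, B x x = 0 → x = 0)
    (hschwartz : ∀ x y : M, (B x y) ^ 2 ≤ B x x * B y y)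
    (hcompat : ∀ x : M, ‖x‖ ^ 2 = B x x)
    (hsmooth : ∀ x : M, x ≠ 0 → DifferentiableAt ℝ (fun y : M => ‖y‖) x)
    (hlip : ∀ x : M, ‖x‖ = 1 → ∃ κ : ℝ, ∀ y z : M, ‖y‖ = 1 → ‖z‖ = 1 →
      |B x y - B x z| ≤ κ * ‖y - z‖)
    -- no two-dimensional subspace has its norm induced by an inner product:
    (hnoellipse : ¬ ∃ P : Submodule ℝ M, Module.finrank ℝ P = 2 ∧
        ∃ f : P →ₗ[ℝ] P →ₗ[ℝ] ℝ, (∀ u v : P, f u v = f v u) ∧ ∀ v : P, f v v = ‖v‖ ^ 2) :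
    ∀ A : M →ₗ[ℝ] M,
      (∃ (ι : Type) (b : Module.Basis ι ℝ M), ∀ i, ∃ μ : ℝ, A (b i) = μ • b i) →
      (∀ x y : M, B (A x) y = B x (A y)) →
      ∃ (c : ℝ) (T : M →ₗ[ℝ] M), (∀ x : M, ‖T x‖ = ‖x‖) ∧ ∀ x : M, A x = c • T x :=
  no_ellipse_section_adjoint_abelian_general B hadd hsmul hschwartz hcompat hsmooth hlip hnoellipse
end

section
/- Let M be a smooth Minkowski space with compatible semi-inner-product B. Then B satisfies the Lipschitz property if, and only if, for every x ∈ M and all sequences (y_n), (z_n) in M with ‖y_n − z_n‖ → 0, one has |B(x,y_n) − B(x,z_n)| → 0. -/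
/-!
Smoothness of the norm pins down `B`: by the Schwartz inequality,
`t ↦ ‖y‖ * ‖y + t • x‖ - t * B x y` is minimal at `t = 0`, so `B x y = ‖y‖ * D‖·‖(y) x`,
and `B x` is positively homogeneous. For a positively homogeneous `f` both conditions amount to
a global bound `|f y - f z| ≤ C * ‖y - z‖`: a bound on the unit sphere spreads to all of `M`
through `y = ‖y‖ • normalize y`, and a failure of the global bound rescales to pairs with
`|f y - f z| = 1` but `‖y - z‖ → 0`.
-/

open Filter Topology NormedSpace

section Normalize

variable {M : Type*} [NormedAddCommGroup M] [NormedSpace ℝ M]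

lemma norm_normalize_le_one (v : M) : ‖normalize v‖ ≤ 1 := by
  rcases eq_or_ne v 0 with rfl | hv
  · simp
  · exact (norm_normalize hv).le

lemma norm_mul_norm_normalize_sub_le (u v : M) :
    ‖u‖ * ‖normalize u - normalize v‖ ≤ 2 * ‖u - v‖ :=
  calc ‖u‖ * ‖normalize u - normalize v‖
      = ‖(u - v) + (‖v‖ - ‖u‖) • normalize v‖ := by
        rw [← norm_smul_of_nonneg (norm_nonneg u), smul_sub, norm_smul_normalize, sub_smul,
          norm_smul_normalize]
        congr 1; abel
    _ ≤ ‖u - v‖ + |‖v‖ - ‖u‖| * ‖normalize v‖ := by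
        grw [norm_add_le, norm_smul, Real.norm_eq_abs]
    _ ≤ ‖u - v‖ + ‖u - v‖ * 1 := by
        rw [abs_sub_comm]
        gcongr
        · exact abs_norm_sub_norm_le u v
        · exact norm_normalize_le_one v
    _ = 2 * ‖u - v‖ := by ring

end Normalize

def PosHomogeneous {M : Type*} [SMul ℝ M] (f : M → ℝ) : Prop :=
  ∀ c : ℝ, 0 < c → ∀ y : M, f (c • y) = c * f y

namespace PosHomogeneous

variable {M : Type*} [NormedAddCommGroup M] [NormedSpace ℝ M] {f : M → ℝ}

lemma map_zero (hf : PosHomogeneous f) : f 0 = 0 := by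
  have h := hf 2 two_pos 0
  rw [smul_zero] at h
  linarith

lemma eq_norm_mul_normalize (hf : PosHomogeneous f) (y : M) : f y = ‖y‖ * f (normalize y) := by
  rcases eq_or_ne y 0 with rfl | hy
  · simp [hf.map_zero]
  · rw [← hf _ (norm_pos_iff.mpr hy), norm_smul_normalize]

lemma abs_sub_le_of_sphere (hf : PosHomogeneous f) {K κ : ℝ} (hK : ∀ y, |f y| ≤ K * ‖y‖)
    (hκ : 0 ≤ κ) (hsphere : ∀ y z : M, ‖y‖ = 1 → ‖z‖ = 1 → |f y - f z| ≤ κ * ‖y - z‖)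
    (u v : M) : |f u - f v| ≤ (2 * κ + K) * ‖u - v‖ := by
  rcases eq_or_ne u 0 with rfl | hu
  · simp only [hf.map_zero, zero_sub, abs_neg, norm_neg]
    nlinarith [hK v, norm_nonneg v]
  rcases eq_or_ne v 0 with rfl | hv
  · simp only [hf.map_zero, sub_zero]
    nlinarith [hK u, norm_nonneg u]
  have hunit : |f (normalize u) - f (normalize v)| ≤ κ * ‖normalize u - normalize v‖ :=
    hsphere _ _ (norm_normalize hu) (norm_normalize hv)
  have hv1 : |f (normalize v)| ≤ K := by simpa [norm_normalize hv] using hK (normalize v)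
  calc |f u - f v|
      = |‖u‖ * (f (normalize u) - f (normalize v)) + (‖u‖ - ‖v‖) * f (normalize v)| := by
        rw [hf.eq_norm_mul_normalize u, hf.eq_norm_mul_normalize v]; ring_nf
    _ ≤ ‖u‖ * (κ * ‖normalize u - normalize v‖) + ‖u - v‖ * K := by
        grw [abs_add_le, abs_mul, abs_mul, abs_norm, hunit, abs_norm_sub_norm_le, hv1]
    _ ≤ κ * (2 * ‖u - v‖) + ‖u - v‖ * K := by
        rw [mul_left_comm]
        gcongr κ * ?_ + _
        exact norm_mul_norm_normalize_sub_le u v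
    _ = (2 * κ + K) * ‖u - v‖ := by ring

lemma exists_abs_sub_le_of_tendsto (hf : PosHomogeneous f)
    (hseq : ∀ y z : ℕ → M, Tendsto (fun n => ‖y n - z n‖) atTop (𝓝 0) →
      Tendsto (fun n => |f (y n) - f (z n)|) atTop (𝓝 0)) :
    ∃ κ : ℝ, ∀ y z : M, |f y - f z| ≤ κ * ‖y - z‖ := by
  by_contra! h
  choose y z hyz using fun n : ℕ => h ((n : ℝ) + 1)
  have hpos : ∀ n, 0 < |f (y n) - f (z n)| := fun n =>
    (mul_nonneg (by positivity) (norm_nonneg _)).trans_lt (hyz n)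
  set c : ℕ → ℝ := fun n => |f (y n) - f (z n)|⁻¹
  have hc : ∀ n, 0 < c n := fun n => inv_pos.mpr (hpos n)
  have hone : ∀ n, |f (c n • y n) - f (c n • z n)| = 1 := by
    intro n
    rw [hf _ (hc n), hf _ (hc n), ← mul_sub, abs_mul, abs_of_pos (hc n),
      inv_mul_cancel₀ (hpos n).ne']
  have hsmall : ∀ n, ‖c n • y n - c n • z n‖ ≤ 1 / ((n : ℝ) + 1) := by
    intro n
    rw [← smul_sub, norm_smul_of_nonneg (hc n).le, le_div_iff₀ (by positivity)]
    calc c n * ‖y n - z n‖ * ((n : ℝ) + 1) = c n * (((n : ℝ) + 1) * ‖y n - z n‖) := by ring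
      _ ≤ c n * |f (y n) - f (z n)| := by gcongr; exact (hyz n).le
      _ = 1 := inv_mul_cancel₀ (hpos n).ne'
  have hlim := hseq _ _
    (squeeze_zero (fun n => norm_nonneg _) hsmall tendsto_one_div_add_atTop_nhds_zero_nat)
  simp only [hone] at hlim
  exact one_ne_zero (tendsto_nhds_unique tendsto_const_nhds hlim)

end PosHomogeneous

section SemiInnerProduct

variable {M : Type*} [NormedAddCommGroup M] {B : M → M → ℝ}

lemma abs_sip_le_norm_mul_norm (hschwartz : ∀ x y : M, (B x y) ^ 2 ≤ B x x * B y y)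
    (hcompat : ∀ x : M, ‖x‖ ^ 2 = B x x) (x y : M) : |B x y| ≤ ‖x‖ * ‖y‖ :=
  abs_le_of_sq_le_sq (by rw [mul_pow, hcompat, hcompat]; exact hschwartz x y) (by positivity)

variable [NormedSpace ℝ M]

lemma sip_eq_norm_mul_fderiv_norm (hadd : ∀ x y z : M, B (x + y) z = B x z + B y z)
    (hsmul : ∀ (c : ℝ) (x y : M), B (c • x) y = c * B x y)
    (hschwartz : ∀ x y : M, (B x y) ^ 2 ≤ B x x * B y y)
    (hcompat : ∀ x : M, ‖x‖ ^ 2 = B x x) {y : M}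
    (hy : DifferentiableAt ℝ (fun w : M => ‖w‖) y) (x : M) :
    B x y = ‖y‖ * fderiv ℝ (fun w : M => ‖w‖) y x := by
  set g : ℝ → ℝ := fun t => ‖y‖ * ‖y + t • x‖ - t * B x y
  have hline : HasDerivAt (fun t : ℝ => y + t • x) x 0 := by
    simpa using ((hasDerivAt_id (0 : ℝ)).smul_const x).const_add y
  have hg : HasDerivAt g (‖y‖ * fderiv ℝ (fun w : M => ‖w‖) y x - B x y) 0 :=
    ((hy.hasFDerivAt.comp_hasDerivAt_of_eq 0 hline (by simp)).const_mul ‖y‖).sub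
      ((hasDerivAt_id 0).mul_const (B x y) |>.congr_deriv (one_mul _))
  have hmin : IsLocalMin g 0 := Eventually.of_forall fun t => by
    have h := (le_abs_self _).trans (abs_sip_le_norm_mul_norm hschwartz hcompat (y + t • x) y)
    rw [hadd, hsmul, ← hcompat] at h
    simp only [g, zero_smul, add_zero, zero_mul, sub_zero]
    nlinarith
  linarith [hmin.hasDerivAt_eq_zero hg]

lemma posHomogeneous_sip (hadd : ∀ x y z : M, B (x + y) z = B x z + B y z)
    (hsmul : ∀ (c : ℝ) (x y : M), B (c • x) y = c * B x y)
    (hschwartz : ∀ x y : M, (B x y) ^ 2 ≤ B x x * B y y)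
    (hcompat : ∀ x : M, ‖x‖ ^ 2 = B x x)
    (hsmooth : ∀ x : M, x ≠ 0 → DifferentiableAt ℝ (fun y : M => ‖y‖) x) (x : M) :
    PosHomogeneous (B x) := by
  intro c hc y
  rcases eq_or_ne y 0 with rfl | hy
  · have h0 : B x 0 = 0 := by
      simpa using abs_sip_le_norm_mul_norm hschwartz hcompat x 0
    rw [smul_zero, h0, mul_zero]
  have hcy : c • y ≠ 0 := smul_ne_zero hc.ne' hy
  rw [sip_eq_norm_mul_fderiv_norm hadd hsmul hschwartz hcompat (hsmooth _ hcy),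
    sip_eq_norm_mul_fderiv_norm hadd hsmul hschwartz hcompat (hsmooth _ hy),
    fderiv_norm_smul_pos hc, norm_smul_of_nonneg hc.le]
  ring

lemma exists_abs_sip_sub_le_of_sphere (hsmul : ∀ (c : ℝ) (x y : M), B (c • x) y = c * B x y)
    (hschwartz : ∀ x y : M, (B x y) ^ 2 ≤ B x x * B y y)
    (hcompat : ∀ x : M, ‖x‖ ^ 2 = B x x) (hhom : ∀ x, PosHomogeneous (B x))
    (hsphere : ∀ x : M, ‖x‖ = 1 → ∃ κ : ℝ, ∀ y z : M, ‖y‖ = 1 → ‖z‖ = 1 →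
      |B x y - B x z| ≤ κ * ‖y - z‖) (x : M) :
    ∃ C : ℝ, ∀ u v : M, |B x u - B x v| ≤ C * ‖u - v‖ := by
  rcases eq_or_ne x 0 with rfl | hx
  · have hzero : ∀ w : M, B 0 w = 0 := fun w => by simpa using hsmul 0 0 w
    exact ⟨0, fun u v => by simp [hzero]⟩
  obtain ⟨κ, hκ⟩ := hsphere _ (norm_normalize hx)
  have hunit := (hhom (normalize x)).abs_sub_le_of_sphere (K := 1)
    (fun w => by
      simpa [norm_normalize hx] using abs_sip_le_norm_mul_norm hschwartz hcompat (normalize x) w)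
    (le_max_right κ 0) (fun u v hu hv => (hκ u v hu hv).trans (by gcongr; exact le_max_left κ 0))
  refine ⟨‖x‖ * (2 * max κ 0 + 1), fun u v => ?_⟩
  rw [← norm_smul_normalize x, hsmul, hsmul, ← mul_sub, abs_mul, abs_norm, norm_smul_normalize x,
    mul_assoc]
  gcongr
  exact hunit u v

end SemiInnerProduct

theorem lipschitz_iff_sequences_general
    {M : Type*} [NormedAddCommGroup M] [NormedSpace ℝ M]
    (B : M → M → ℝ)
    (hadd : ∀ x y z : M, B (x + y) z = B x z + B y z)
    (hsmul : ∀ (c : ℝ) (x y : M), B (c • x) y = c * B x y)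
    (hschwartz : ∀ x y : M, (B x y) ^ 2 ≤ B x x * B y y)
    (hcompat : ∀ x : M, ‖x‖ ^ 2 = B x x)
    (hsmooth : ∀ x : M, x ≠ 0 → DifferentiableAt ℝ (fun y : M => ‖y‖) x) :
    (∀ x : M, ‖x‖ = 1 → ∃ κ : ℝ, ∀ y z : M, ‖y‖ = 1 → ‖z‖ = 1 →
        |B x y - B x z| ≤ κ * ‖y - z‖) ↔
    (∀ (x : M) (y z : ℕ → M),
        Filter.Tendsto (fun n => ‖y n - z n‖) Filter.atTop (nhds 0) →
        Filter.Tendsto (fun n => |B x (y n) - B x (z n)|) Filter.atTop (nhds 0)) := by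
  have hhom := posHomogeneous_sip hadd hsmul hschwartz hcompat hsmooth
  constructor
  · intro hsphere x y z hyz
    obtain ⟨C, hC⟩ := exists_abs_sip_sub_le_of_sphere hsmul hschwartz hcompat hhom hsphere x
    exact squeeze_zero (fun n => abs_nonneg _) (fun n => hC _ _) (by simpa using hyz.const_mul C)
  · intro hseq x _
    obtain ⟨κ, hκ⟩ := (hhom x).exists_abs_sub_le_of_tendsto (hseq x)
    exact ⟨κ, fun y z _ _ => hκ y z⟩

/-- The Lipschitz property holds iff for every x and all sequences
(y_n), (z_n) with ‖y_n − z_n‖ → 0 one has |B(x,y_n) − B(x,z_n)| → 0. -/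
theorem lipschitz_iff_sequences
    {M : Type*} [NormedAddCommGroup M] [NormedSpace ℝ M] [FiniteDimensional ℝ M]
    (B : M → M → ℝ)
    (hadd : ∀ x y z : M, B (x + y) z = B x z + B y z)
    (hsmul : ∀ (c : ℝ) (x y : M), B (c • x) y = c * B x y)
    (hpos : ∀ x : M, 0 ≤ B x x)
    (hdef : ∀ x : M, B x x = 0 → x = 0)
    (hschwartz : ∀ x y : M, (B x y) ^ 2 ≤ B x x * B y y)
    (hcompat : ∀ x : M, ‖x‖ ^ 2 = B x x)
    (hsmooth : ∀ x : M, x ≠ 0 → DifferentiableAt ℝ (fun y : M => ‖y‖) x) :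
    (∀ x : M, ‖x‖ = 1 → ∃ κ : ℝ, ∀ y z : M, ‖y‖ = 1 → ‖z‖ = 1 →
        |B x y - B x z| ≤ κ * ‖y - z‖) ↔
    (∀ (x : M) (y z : ℕ → M),
        Filter.Tendsto (fun n => ‖y n - z n‖) Filter.atTop (nhds 0) →
        Filter.Tendsto (fun n => |B x (y n) - B x (z n)|) Filter.atTop (nhds 0)) :=
  lipschitz_iff_sequences_general B hadd hsmul hschwartz hcompat hsmooth
end

section
/- Let M be a smooth Minkowski space whose compatible semi-inner-product B satisfies the Lipschitz property, and let A : M → M be a diagonalizable linear operator that is adjoint abelian with respect to B. Write each x ∈ M uniquely as x = x_1 + … + x_k with x_i ∈ Ē_i. If z ∈ Ē_i for some i ∈ {1, …, k}, then B(z, x) = B(z, x_i). -/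
/-!
For `z ∈ Ē_i` put `f = B z`. Smoothness identifies `B z y` with the derivative of
`t ↦ ‖y + t • z‖² / 2` at `0`, which makes `f` positively homogeneous; together with the Lipschitz
property on the unit sphere this makes `f` globally Lipschitz. Adjoint abelianness gives
`f (A² y) = λ_i² f y`.

If `λ_i > 0`, then `f y = f (λ_i⁻²ⁿ • A²ⁿ y)` for all `n`. Applied to `x`, the components with
`λ_j < λ_i` die as `n → ∞`; applied to rescaled vectors, so do those with `λ_j > λ_i`. The
Lipschitz bound carries both limits through `f`.

If `λ_i = 0`, then `z, x_i ∈ ker A` and `x - x_i = A u`. Adjoint abelianness yields the Pythagorean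
identity `‖A u + w‖² = ‖A u‖² + ‖w‖²` for `w ∈ ker A`, and differentiating
`‖x + t • z‖² / 2 = ‖A u‖² / 2 + ‖x_i + t • z‖² / 2` at `0` gives `B z x = B z x_i`.
-/

open Filter Topology

section PosHomogeneous

variable {E : Type*} [NormedAddCommGroup E] [NormedSpace ℝ E]

theorem norm_mul_norm_sub_normalize_le {y y' : E} (hy' : y' ≠ 0) :
    ‖y‖ * ‖‖y‖⁻¹ • y - ‖y'‖⁻¹ • y'‖ ≤ 2 * ‖y - y'‖ := by
  rcases eq_or_ne y 0 with rfl | hy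
  · simp
  have hy'n : ‖y'‖ ≠ 0 := norm_ne_zero_iff.mpr hy'
  set u' := ‖y'‖⁻¹ • y'
  have hu' : ‖u'‖ = 1 := norm_smul_inv_norm hy'
  have hscale : ‖y‖ • (‖y‖⁻¹ • y - u') = y - ‖y‖ • u' := by
    rw [smul_sub, smul_inv_smul₀ (norm_ne_zero_iff.mpr hy)]
  have hy'eq : y' = ‖y'‖ • u' := (smul_inv_smul₀ hy'n y').symm
  calc ‖y‖ * ‖‖y‖⁻¹ • y - u'‖ = ‖y - ‖y‖ • u'‖ := by
        rw [← hscale, norm_smul, norm_norm]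
    _ ≤ ‖y - y'‖ + ‖y' - ‖y‖ • u'‖ := norm_sub_le_norm_sub_add_norm_sub _ _ _
    _ = ‖y - y'‖ + |‖y'‖ - ‖y‖| := by
        conv_lhs => rw [hy'eq, ← sub_smul, norm_smul, hu', mul_one, Real.norm_eq_abs]
        rw [← hy'eq]
    _ ≤ 2 * ‖y - y'‖ := by
        have := abs_norm_sub_norm_le y' y
        rw [norm_sub_rev y' y] at this
        linarith

theorem lipschitzWith_of_pos_homogeneous {g : E → ℝ} {C κ : NNReal}
    (hhom : ∀ t : ℝ, 0 < t → ∀ y, g (t • y) = t * g y) (hbd : ∀ y, |g y| ≤ C * ‖y‖)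
    (hsph : ∀ y y', ‖y‖ = 1 → ‖y'‖ = 1 → |g y - g y'| ≤ κ * ‖y - y'‖) :
    LipschitzWith (2 * κ + C) g := by
  refine LipschitzWith.of_dist_le_mul fun y y' => ?_
  rw [Real.dist_eq, dist_eq_norm]
  push_cast
  have hg0 : g 0 = 0 := abs_nonpos_iff.mp (by simpa using hbd 0)
  rcases eq_or_ne y' 0 with rfl | hy'
  · have := hbd y
    rw [hg0, sub_zero, sub_zero]
    nlinarith [norm_nonneg y, κ.2]
  have hnormalize : ∀ x : E, x ≠ 0 → g x = ‖x‖ * g (‖x‖⁻¹ • x) := fun x hx => by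
    rw [← hhom _ (norm_pos_iff.mpr hx), smul_inv_smul₀ (norm_ne_zero_iff.mpr hx)]
  set u' := ‖y'‖⁻¹ • y'
  have hu' : ‖u'‖ = 1 := norm_smul_inv_norm hy'
  have hgu' : |g u'| ≤ C := by simpa [hu'] using hbd u'
  have hdiff : ‖y‖ * |g (‖y‖⁻¹ • y) - g u'| ≤ κ * (2 * ‖y - y'‖) := by
    rcases eq_or_ne y 0 with rfl | hy
    · simp only [norm_zero, zero_mul]
      positivity
    calc ‖y‖ * |g (‖y‖⁻¹ • y) - g u'| ≤ ‖y‖ * (κ * ‖‖y‖⁻¹ • y - u'‖) :=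
          mul_le_mul_of_nonneg_left (hsph _ _ (norm_smul_inv_norm hy) hu') (norm_nonneg y)
      _ = κ * (‖y‖ * ‖‖y‖⁻¹ • y - u'‖) := by ring
      _ ≤ κ * (2 * ‖y - y'‖) := mul_le_mul_of_nonneg_left
          (norm_mul_norm_sub_normalize_le hy') κ.2
  have hsplit : g y - g y' = ‖y‖ * (g (‖y‖⁻¹ • y) - g u') + (‖y‖ - ‖y'‖) * g u' := by
    rcases eq_or_ne y 0 with rfl | hy
    · rw [hnormalize y' hy', hg0]
      simp [u']
    rw [hnormalize y hy, hnormalize y' hy']; ring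
  calc |g y - g y'| ≤ ‖y‖ * |g (‖y‖⁻¹ • y) - g u'| + |‖y‖ - ‖y'‖| * C := by
        rw [hsplit]
        refine (abs_add_le _ _).trans ?_
        rw [abs_mul, abs_mul, abs_norm]
        gcongr
    _ ≤ κ * (2 * ‖y - y'‖) + ‖y - y'‖ * C := by
        gcongr
        exact abs_norm_sub_norm_le y y'
    _ = (2 * κ + C) * ‖y - y'‖ := by ring

end PosHomogeneous

theorem LipschitzWith.apply_eq_of_tendsto_sub {E : Type*} [SeminormedAddCommGroup E] {f : E → ℝ}
    {K : NNReal} (hf : LipschitzWith K f) {a b : ℕ → E} {p q : E}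
    (ha : ∀ n, f (a n) = f p) (hb : ∀ n, f (b n) = f q)
    (hab : Tendsto (fun n => a n - b n) atTop (𝓝 0)) : f p = f q := by
  have h : Tendsto (fun n => f (a n) - f (b n)) atTop (𝓝 0) := by
    refine squeeze_zero_norm (fun n => ?_) (by simpa using hab.norm.const_mul (K : ℝ))
    rw [← dist_eq_norm, ← dist_eq_norm]
    exact hf.dist_le_mul _ _
  simp only [ha, hb] at h
  exact sub_eq_zero.mp (tendsto_nhds_unique tendsto_const_nhds h)

theorem tendsto_sum_pow_smul_nhds_zero {E ι : Type*} [NormedAddCommGroup E] [NormedSpace ℝ E]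
    (s : Finset ι) {r : ι → ℝ} (c : ι → E)
    (hr : ∀ j ∈ s, |r j| < 1) : Tendsto (fun n => ∑ j ∈ s, r j ^ n • c j) atTop (𝓝 0) := by
  simpa using tendsto_finsetSum s fun j hj =>
    (tendsto_pow_atTop_nhds_zero_of_abs_lt_one (hr j hj)).smul_const (c j)

theorem Module.End.pow_apply_of_mem_eigenspace {K V : Type*} [CommRing K] [AddCommGroup V]
    [Module K V] {T : Module.End K V} {ν : K} {v : V} (hv : v ∈ T.eigenspace ν) (n : ℕ) :
    (T ^ n) v = ν ^ n • v := by
  induction n with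
  | zero => simp
  | succ n ih =>
    rw [pow_succ', Module.End.mul_apply, ih, map_smul, Module.End.mem_eigenspace_iff.mp hv,
      smul_smul, pow_succ]

theorem Module.End.inv_pow_smul_pow_apply_sum {K V ι : Type*} [Field K] [AddCommGroup V]
    [Module K V] {T : Module.End K V} (μ : K) (s : Finset ι) {c : ι → V} {ν : ι → K}
    (hc : ∀ j, c j ∈ T.eigenspace (ν j)) (n : ℕ) :
    (μ ^ n)⁻¹ • (T ^ n) (∑ j ∈ s, c j) = ∑ j ∈ s, (ν j / μ) ^ n • c j := by
  rw [map_sum, Finset.smul_sum]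
  refine Finset.sum_congr rfl fun j _ => ?_
  rw [pow_apply_of_mem_eigenspace (hc j), smul_smul, div_pow, div_eq_inv_mul]

theorem Module.End.eigenspace_sup_eigenspace_neg_le_eigenspace_sq {K V : Type*} [CommRing K]
    [AddCommGroup V] [Module K V] {T : Module.End K V} {μ : K} :
    T.eigenspace μ ⊔ T.eigenspace (-μ) ≤ (T ^ 2).eigenspace (μ ^ 2) := by
  refine sup_le (fun v hv => ?_) (fun v hv => ?_) <;> rw [Module.End.mem_eigenspace_iff]
  · exact pow_apply_of_mem_eigenspace hv 2
  · rw [pow_apply_of_mem_eigenspace hv 2, neg_sq]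

theorem Module.End.eigenspace_le_range {K V : Type*} [Field K] [AddCommGroup V] [Module K V]
    {T : Module.End K V} {μ : K} (hμ : μ ≠ 0) : T.eigenspace μ ≤ LinearMap.range T :=
  fun v hv => ⟨μ⁻¹ • v, by rw [map_smul, mem_eigenspace_iff.mp hv, inv_smul_smul₀ hμ]⟩

section ScaledIteration

variable {E ι : Type*} [NormedAddCommGroup E] [NormedSpace ℝ E] {f : E → ℝ} {K : NNReal}
  {T : Module.End ℝ E} {μ : ℝ} {c : ι → E} {ν : ι → ℝ}

theorem apply_inv_pow_smul_pow_apply (hhom : ∀ t : ℝ, 0 < t → ∀ y, f (t • y) = t * f y)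
    (hT : ∀ y, f (T y) = μ * f y) (hμ : 0 < μ) (n : ℕ) (y : E) :
    f ((μ ^ n)⁻¹ • (T ^ n) y) = f y := by
  have hpow : f ((T ^ n) y) = μ ^ n * f y := by
    induction n with
    | zero => simp
    | succ n ih => rw [pow_succ', Module.End.mul_apply, hT, ih, pow_succ']; ring
  rw [hhom _ (by positivity), hpow, inv_mul_cancel_left₀ (by positivity)]

theorem apply_sum_eq_apply_sum_filter_le (hf : LipschitzWith K f)
    (hhom : ∀ t : ℝ, 0 < t → ∀ y, f (t • y) = t * f y) (hT : ∀ y, f (T y) = μ * f y)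
    (hμ : 0 < μ) (hc : ∀ j, c j ∈ T.eigenspace (ν j)) (s : Finset ι) :
    f (∑ j ∈ s, c j) = f (∑ j ∈ s with μ ≤ |ν j|, c j) := by
  refine hf.apply_eq_of_tendsto_sub (fun n => apply_inv_pow_smul_pow_apply hhom hT hμ n _)
    (fun n => apply_inv_pow_smul_pow_apply hhom hT hμ n _) ?_
  have hsub : ∀ n, (μ ^ n)⁻¹ • (T ^ n) (∑ j ∈ s, c j) -
      (μ ^ n)⁻¹ • (T ^ n) (∑ j ∈ s with μ ≤ |ν j|, c j) =
      ∑ j ∈ s with ¬μ ≤ |ν j|, (ν j / μ) ^ n • c j := fun n => by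
    rw [← smul_sub, ← map_sub, ← Finset.sum_filter_add_sum_filter_not s (fun j => μ ≤ |ν j|),
      add_sub_cancel_left, Module.End.inv_pow_smul_pow_apply_sum μ _ hc]
  simp_rw [hsub]
  refine tendsto_sum_pow_smul_nhds_zero _ _ fun j hj => ?_
  rw [abs_div, abs_of_pos hμ, div_lt_one hμ]
  exact not_le.mp (Finset.mem_filter.mp hj).2

theorem apply_sum_eq_apply_of_lt_abs (hf : LipschitzWith K f)
    (hhom : ∀ t : ℝ, 0 < t → ∀ y, f (t • y) = t * f y) (hT : ∀ y, f (T y) = μ * f y)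
    (hμ : 0 < μ) (hc : ∀ j, c j ∈ T.eigenspace (ν j)) {s : Finset ι} {i : ι} (hi : i ∈ s)
    (hνi : ν i = μ) (hlt : ∀ j ∈ s, j ≠ i → μ < |ν j|) :
    f (∑ j ∈ s, c j) = f (c i) := by
  classical
  have hν : ∀ j ∈ s, ν j ≠ 0 := fun j hj => by
    rcases eq_or_ne j i with rfl | hji
    · exact hνi ▸ hμ.ne'
    · exact abs_pos.mp (hμ.trans (hlt j hj hji))
  -- rescale the components so that `T ^ m` brings them back to `μ ^ m • c j`
  have hscaled : ∀ m, (μ ^ m)⁻¹ • (T ^ m) (∑ j ∈ s, (μ / ν j) ^ m • c j) = ∑ j ∈ s, c j :=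
    fun m => by
      rw [Module.End.inv_pow_smul_pow_apply_sum μ s (fun j => Submodule.smul_mem _ _ (hc j))]
      refine Finset.sum_congr rfl fun j hj => ?_
      rw [smul_smul, ← mul_pow, div_mul_div_cancel₀ hμ.ne', div_self (hν j hj), one_pow,
        one_smul]
  refine hf.apply_eq_of_tendsto_sub (a := fun m => ∑ j ∈ s, (μ / ν j) ^ m • c j)
    (b := fun _ => c i) (fun m => by rw [← hscaled m, apply_inv_pow_smul_pow_apply hhom hT hμ])
    (fun _ => rfl) ?_
  have hsub : ∀ m, ∑ j ∈ s, (μ / ν j) ^ m • c j - c i =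
      ∑ j ∈ s.erase i, (μ / ν j) ^ m • c j := fun m => by
    rw [← Finset.add_sum_erase s _ hi, hνi, div_self hμ.ne', one_pow, one_smul,
      add_sub_cancel_left]
  simp_rw [hsub]
  refine tendsto_sum_pow_smul_nhds_zero _ _ fun j hj => ?_
  obtain ⟨hji, hjs⟩ := Finset.mem_erase.mp hj
  rw [abs_div, abs_of_pos hμ, div_lt_one (hμ.trans (hlt j hjs hji))]
  exact hlt j hjs hji

theorem apply_sum_eq_apply_of_abs_ne [Fintype ι] (hf : LipschitzWith K f)
    (hhom : ∀ t : ℝ, 0 < t → ∀ y, f (t • y) = t * f y) (hT : ∀ y, f (T y) = μ * f y)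
    (hμ : 0 < μ) (hc : ∀ j, c j ∈ T.eigenspace (ν j)) (i : ι) (hνi : ν i = μ)
    (hne : ∀ j, j ≠ i → |ν j| ≠ μ) :
    f (∑ j, c j) = f (c i) := by
  rw [apply_sum_eq_apply_sum_filter_le hf hhom hT hμ hc]
  exact apply_sum_eq_apply_of_lt_abs hf hhom hT hμ hc (by simp [hνi, abs_of_pos hμ]) hνi
    fun j hj hji => lt_of_le_of_ne (Finset.mem_filter.mp hj).2 (hne j hji).symm

end ScaledIteration

structure IsCompatibleSemiInnerProduct {M : Type*} [NormedAddCommGroup M] [NormedSpace ℝ M]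
    (B : M → M → ℝ) : Prop where
  add_left : ∀ x y z, B (x + y) z = B x z + B y z
  smul_left : ∀ (c : ℝ) x y, B (c • x) y = c * B x y
  sq_le_mul : ∀ x y, B x y ^ 2 ≤ B x x * B y y
  norm_sq : ∀ x, ‖x‖ ^ 2 = B x x

namespace IsCompatibleSemiInnerProduct

variable {M : Type*} [NormedAddCommGroup M] [NormedSpace ℝ M] {B : M → M → ℝ}

theorem apply_zero_left (hB : IsCompatibleSemiInnerProduct B) (y : M) : B 0 y = 0 := by
  simpa using hB.smul_left 0 0 y

theorem abs_apply_le (hB : IsCompatibleSemiInnerProduct B) (x y : M) :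
    |B x y| ≤ ‖x‖ * ‖y‖ :=
  abs_le_of_sq_le_sq (by rw [mul_pow, hB.norm_sq, hB.norm_sq]; exact hB.sq_le_mul x y)
    (by positivity)

theorem norm_sq_add_mul_apply_le (hB : IsCompatibleSemiInnerProduct B) (y z : M) (t : ℝ) :
    ‖y‖ ^ 2 / 2 + t * B z y ≤ ‖y + t • z‖ ^ 2 / 2 := by
  have h : B (y + t • z) y = ‖y‖ ^ 2 + t * B z y := by
    rw [hB.add_left, hB.smul_left, hB.norm_sq]
  have hle := (le_abs_self _).trans (hB.abs_apply_le (y + t • z) y)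
  nlinarith [sq_nonneg (‖y + t • z‖ - ‖y‖)]

theorem hasDerivAt_norm_add_smul_sq_zero (hB : IsCompatibleSemiInnerProduct B)
    (hsmooth : ∀ x : M, x ≠ 0 → DifferentiableAt ℝ (fun y : M => ‖y‖) x) (y z : M) :
    HasDerivAt (fun t : ℝ => ‖y + t • z‖ ^ 2 / 2) (B z y) 0 := by
  set g : ℝ → ℝ := fun t => ‖y + t • z‖ ^ 2 / 2
  have hg : DifferentiableAt ℝ g 0 := by
    by_cases hy : y = 0
    · subst hy
      have : g = fun t => t ^ 2 * ‖z‖ ^ 2 / 2 := by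
        ext t; simp [g, norm_smul, mul_pow]
      rw [this]; fun_prop
    · have hnorm : DifferentiableAt ℝ (fun y : M => ‖y‖) (y + (0 : ℝ) • z) := by
        simpa using hsmooth y hy
      exact ((hnorm.comp (0 : ℝ) (by fun_prop)).pow 2).div_const 2
  -- `t ↦ t * B z y` is a supporting line of `g` at `0`
  have hmin : IsLocalMin (fun t => g t - t * B z y) 0 :=
    Eventually.of_forall fun t => by
      have := hB.norm_sq_add_mul_apply_le y z t
      simp only [g, zero_smul, add_zero, zero_mul, sub_zero]
      linarith
  have hsub := hg.hasDerivAt.sub (hasDerivAt_mul_const (B z y) (x := (0 : ℝ)))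
  have hderiv : deriv g 0 = B z y := sub_eq_zero.mp (hmin.hasDerivAt_eq_zero hsub)
  exact hderiv ▸ hg.hasDerivAt

theorem hasDerivAt_norm_add_smul_sq (hB : IsCompatibleSemiInnerProduct B)
    (hsmooth : ∀ x : M, x ≠ 0 → DifferentiableAt ℝ (fun y : M => ‖y‖) x) (y z : M) (τ : ℝ) :
    HasDerivAt (fun t : ℝ => ‖y + t • z‖ ^ 2 / 2) (B z (y + τ • z)) τ := by
  have h := hB.hasDerivAt_norm_add_smul_sq_zero hsmooth (y + τ • z) z
  rw [← sub_self τ] at h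
  refine (h.comp_sub_const τ τ).congr_of_eventuallyEq (Eventually.of_forall fun t => ?_)
  simp only [add_assoc, ← add_smul, add_sub_cancel]

theorem apply_smul_right_of_pos (hB : IsCompatibleSemiInnerProduct B)
    (hsmooth : ∀ x : M, x ≠ 0 → DifferentiableAt ℝ (fun y : M => ‖y‖) x) (z y : M) {t : ℝ}
    (ht : 0 < t) : B z (t • y) = t * B z y := by
  have hy : HasDerivAt (fun s : ℝ => ‖y + s • z‖ ^ 2 / 2) (B z y) (0 / t) := by
    simpa using hB.hasDerivAt_norm_add_smul_sq_zero hsmooth y z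
  have hscaled : HasDerivAt (fun s : ℝ => t ^ 2 * (‖y + (s / t) • z‖ ^ 2 / 2))
      (t ^ 2 * (B z y * (1 / t))) 0 :=
    (hy.comp 0 ((hasDerivAt_id (0 : ℝ)).div_const t)).const_mul (t ^ 2)
  have hfun : (fun s : ℝ => t ^ 2 * (‖y + (s / t) • z‖ ^ 2 / 2)) =
      fun s => ‖t • y + s • z‖ ^ 2 / 2 := by
    ext s
    have h : t • (y + (s / t) • z) = t • y + s • z := by
      rw [smul_add, smul_smul, mul_div_cancel₀ s ht.ne']
    rw [← h, norm_smul, Real.norm_eq_abs, abs_of_pos ht]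
    ring
  rw [hfun] at hscaled
  rw [(hB.hasDerivAt_norm_add_smul_sq_zero hsmooth (t • y) z).unique hscaled]
  field_simp

theorem exists_lipschitzWith_right (hB : IsCompatibleSemiInnerProduct B)
    (hsmooth : ∀ x : M, x ≠ 0 → DifferentiableAt ℝ (fun y : M => ‖y‖) x)
    (hlip : ∀ x : M, ‖x‖ = 1 → ∃ κ : ℝ, ∀ y z : M, ‖y‖ = 1 → ‖z‖ = 1 →
      |B x y - B x z| ≤ κ * ‖y - z‖) (z : M) :
    ∃ K, LipschitzWith K (B z) := by
  obtain ⟨κ, hκ⟩ : ∃ κ : NNReal, ∀ y y' : M, ‖y‖ = 1 → ‖y'‖ = 1 →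
      |B z y - B z y'| ≤ κ * ‖y - y'‖ := by
    rcases eq_or_ne z 0 with rfl | hz
    · exact ⟨0, fun y y' _ _ => by simp [hB.apply_zero_left]⟩
    obtain ⟨κ, hκ⟩ := hlip _ (norm_smul_inv_norm (𝕜 := ℝ) hz)
    refine ⟨‖z‖₊ * κ.toNNReal, fun y y' hy hy' => ?_⟩
    have hz' : ∀ w, B z w = ‖z‖ * B (‖z‖⁻¹ • z) w := fun w => by
      rw [← hB.smul_left, smul_inv_smul₀ (norm_ne_zero_iff.mpr hz)]
    rw [hz', hz', ← mul_sub, abs_mul, abs_norm, NNReal.coe_mul, coe_nnnorm, mul_assoc]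
    gcongr
    exact (hκ y y' hy hy').trans (by gcongr; exact Real.le_coe_toNNReal κ)
  exact ⟨_, lipschitzWith_of_pos_homogeneous (C := ‖z‖₊)
    (fun t ht y => hB.apply_smul_right_of_pos hsmooth z y ht) (hB.abs_apply_le z) hκ⟩

theorem norm_add_sq_of_apply_eq_zero (hB : IsCompatibleSemiInnerProduct B)
    (hsmooth : ∀ x : M, x ≠ 0 → DifferentiableAt ℝ (fun y : M => ‖y‖) x) {A : Module.End ℝ M}
    (habel : ∀ x y : M, B (A x) y = B x (A y)) (u : M) {w : M} (hw : A w = 0) :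
    ‖A u + w‖ ^ 2 = ‖A u‖ ^ 2 + ‖w‖ ^ 2 := by
  set F : ℝ → ℝ := fun s => ‖w + s • A u‖ ^ 2 / 2 - ‖0 + s • A u‖ ^ 2 / 2
  -- both derivatives equal `B u (s • A (A u))`, because `A w = 0`
  have hF : ∀ s, HasDerivAt F 0 s := fun s => by
    have h := (hB.hasDerivAt_norm_add_smul_sq hsmooth w (A u) s).sub
      (hB.hasDerivAt_norm_add_smul_sq hsmooth 0 (A u) s)
    rwa [habel, habel, map_add, map_add, hw, map_zero, sub_self] at h
  have hconst := is_const_of_deriv_eq_zero (fun s => (hF s).differentiableAt)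
    (fun s => (hF s).deriv) 1 0
  simp only [F, one_smul, zero_smul, add_zero, zero_add, norm_zero] at hconst
  rw [add_comm]
  linarith

theorem apply_add_of_apply_eq_zero (hB : IsCompatibleSemiInnerProduct B)
    (hsmooth : ∀ x : M, x ≠ 0 → DifferentiableAt ℝ (fun y : M => ‖y‖) x) {A : Module.End ℝ M}
    (habel : ∀ x y : M, B (A x) y = B x (A y)) {z w : M} (hz : A z = 0) (hw : A w = 0)
    (u : M) : B z (A u + w) = B z w := by
  have hsum := hB.hasDerivAt_norm_add_smul_sq_zero hsmooth (A u + w) z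
  have hfun : (fun t : ℝ => ‖A u + w + t • z‖ ^ 2 / 2) =
      fun t => ‖A u‖ ^ 2 / 2 + ‖w + t • z‖ ^ 2 / 2 := by
    ext t
    rw [add_assoc, hB.norm_add_sq_of_apply_eq_zero hsmooth habel u (by simp [hw, hz])]
    ring
  rw [hfun] at hsum
  exact hsum.unique ((hB.hasDerivAt_norm_add_smul_sq_zero hsmooth w z).const_add _)

theorem apply_sq_right_of_mem_eigenspace (hB : IsCompatibleSemiInnerProduct B) {A : Module.End ℝ M}
    (habel : ∀ x y : M, B (A x) y = B x (A y)) {μ : ℝ} {z : M}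
    (hz : z ∈ (A ^ 2).eigenspace μ) (y : M) : B z ((A ^ 2) y) = μ * B z y := by
  rw [sq, Module.End.mul_apply, ← habel, ← habel, ← Module.End.mul_apply, ← sq,
    Module.End.mem_eigenspace_iff.mp hz, hB.smul_left]

end IsCompatibleSemiInnerProduct

theorem sip_decomposition_general
    {M : Type*} [NormedAddCommGroup M] [NormedSpace ℝ M]
    (B : M → M → ℝ)
    (hadd : ∀ x y z : M, B (x + y) z = B x z + B y z)
    (hsmul : ∀ (c : ℝ) (x y : M), B (c • x) y = c * B x y)
    (hschwartz : ∀ x y : M, (B x y) ^ 2 ≤ B x x * B y y)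
    (hcompat : ∀ x : M, ‖x‖ ^ 2 = B x x)
    (hsmooth : ∀ x : M, x ≠ 0 → DifferentiableAt ℝ (fun y : M => ‖y‖) x)
    (hlip : ∀ x : M, ‖x‖ = 1 → ∃ κ : ℝ, ∀ y z : M, ‖y‖ = 1 → ‖z‖ = 1 →
      |B x y - B x z| ≤ κ * ‖y - z‖)
    (A : M →ₗ[ℝ] M)
    -- A is adjoint abelian:
    (habel : ∀ x y : M, B (A x) y = B x (A y))
    -- λ₁ > λ₂ > … > λ_k ≥ 0 are the absolute values of the eigenvalues of A:
    (k : ℕ) (lam : Fin k → ℝ) (hanti : StrictAnti lam) (hnonneg : ∀ i, 0 ≤ lam i)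
    (E : Fin k → Submodule ℝ M) (hE : ∀ i, E i = Module.End.eigenspace A (lam i))
    (Eneg : Fin k → Submodule ℝ M) (hEneg : ∀ i, Eneg i = Module.End.eigenspace A (-(lam i)))
    (Ebar : Fin k → Submodule ℝ M) (hEbar : ∀ i, Ebar i = E i ⊔ Eneg i)
    -- the decomposition x = x₁ + … + x_k with x_i ∈ Ē_i:
    (x : M) (c : Fin k → M) (hc : ∀ i, c i ∈ Ebar i) (hx : x = ∑ i, c i)
    (i : Fin k) (z : M) (hz : z ∈ Ebar i) :
    B z x = B z (c i) := by
  have hB : IsCompatibleSemiInnerProduct B := ⟨hadd, hsmul, hschwartz, hcompat⟩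
  have hEbar' : ∀ j, Ebar j = Module.End.eigenspace A (lam j) ⊔ Module.End.eigenspace A (-lam j) :=
    fun j => by rw [hEbar, hE, hEneg]
  rcases (hnonneg i).lt_or_eq with hpos | hzero
  · obtain ⟨K, hK⟩ := hB.exists_lipschitzWith_right hsmooth hlip z
    have hsq : ∀ j, Ebar j ≤ Module.End.eigenspace (A ^ 2) (lam j ^ 2) := fun j =>
      hEbar' j ▸ Module.End.eigenspace_sup_eigenspace_neg_le_eigenspace_sq
    rw [hx]
    refine apply_sum_eq_apply_of_abs_ne hK (fun t ht y => hB.apply_smul_right_of_pos hsmooth z y ht)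
      (hB.apply_sq_right_of_mem_eigenspace habel (hsq i hz)) (by positivity)
      (fun j => hsq j (hc j)) i rfl fun j hj h => hj (hanti.injective ?_)
    rwa [abs_sq, sq_eq_sq₀ (hnonneg j) (hnonneg i)] at h
  · -- `i` is the last index: `Ebar i = ker A`, and every other `Ebar j` lies in `range A`
    have hker : Ebar i ≤ LinearMap.ker A := by
      rw [hEbar', ← hzero, neg_zero, sup_idem, Module.End.eigenspace_zero]
    have hrange : ∀ j, j ≠ i → Ebar j ≤ LinearMap.range A := fun j hj => by
      have hlam : lam j ≠ 0 := fun h => hj (hanti.injective (h.trans hzero))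
      rw [hEbar']
      exact sup_le (Module.End.eigenspace_le_range hlam)
        (Module.End.eigenspace_le_range (neg_ne_zero.mpr hlam))
    obtain ⟨u, hu⟩ : ∑ j ∈ Finset.univ.erase i, c j ∈ LinearMap.range A :=
      Submodule.sum_mem _ fun j hj => hrange j (Finset.ne_of_mem_erase hj) (hc j)
    rw [hx, ← Finset.sum_erase_add _ _ (Finset.mem_univ i), ← hu]
    exact hB.apply_add_of_apply_eq_zero hsmooth habel (hker hz) (hker (hc i)) u

/-- (Lemma 2 of the paper.) For a diagonalizable adjoint abelian operator
A on a smooth Minkowski space with Lipschitz semi-inner-product, if x = x₁ + … + x_k with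
x_i ∈ Ē_i and z ∈ Ē_i, then B(z,x) = B(z,x_i). -/
theorem sip_decomposition
    {M : Type*} [NormedAddCommGroup M] [NormedSpace ℝ M] [FiniteDimensional ℝ M]
    (B : M → M → ℝ)
    (hadd : ∀ x y z : M, B (x + y) z = B x z + B y z)
    (hsmul : ∀ (c : ℝ) (x y : M), B (c • x) y = c * B x y)
    (hpos : ∀ x : M, 0 ≤ B x x)
    (hdef : ∀ x : M, B x x = 0 → x = 0)
    (hschwartz : ∀ x y : M, (B x y) ^ 2 ≤ B x x * B y y)
    (hcompat : ∀ x : M, ‖x‖ ^ 2 = B x x)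
    (hsmooth : ∀ x : M, x ≠ 0 → DifferentiableAt ℝ (fun y : M => ‖y‖) x)
    (hlip : ∀ x : M, ‖x‖ = 1 → ∃ κ : ℝ, ∀ y z : M, ‖y‖ = 1 → ‖z‖ = 1 →
      |B x y - B x z| ≤ κ * ‖y - z‖)
    (A : M →ₗ[ℝ] M)
    -- A is diagonalizable:
    (hdiag : ∃ (ι : Type) (b : Module.Basis ι ℝ M), ∀ i, ∃ μ : ℝ, A (b i) = μ • b i)
    -- A is adjoint abelian:
    (habel : ∀ x y : M, B (A x) y = B x (A y))
    -- λ₁ > λ₂ > … > λ_k ≥ 0 are the absolute values of the eigenvalues of A: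
    (k : ℕ) (lam : Fin k → ℝ) (hanti : StrictAnti lam) (hnonneg : ∀ i, 0 ≤ lam i)
    (heig : Set.range lam = {r : ℝ | ∃ μ : ℝ, Module.End.HasEigenvalue A μ ∧ |μ| = r})
    (E : Fin k → Submodule ℝ M) (hE : ∀ i, E i = Module.End.eigenspace A (lam i))
    (Eneg : Fin k → Submodule ℝ M) (hEneg : ∀ i, Eneg i = Module.End.eigenspace A (-(lam i)))
    (Ebar : Fin k → Submodule ℝ M) (hEbar : ∀ i, Ebar i = E i ⊔ Eneg i)
    -- the decomposition x = x₁ + … + x_k with x_i ∈ Ē_i: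
    (x : M) (c : Fin k → M) (hc : ∀ i, c i ∈ Ebar i) (hx : x = ∑ i, c i)
    (i : Fin k) (z : M) (hz : z ∈ Ebar i) :
    B z x = B z (c i) :=
  sip_decomposition_general B hadd hsmul hschwartz hcompat hsmooth hlip A habel k lam hanti hnonneg
    E hE Eneg hEneg Ebar hEbar x c hc hx i z hz
end
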